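/- Let g ≥ 0, r ≥ 1, and let F(x,y,u,t) be the rational power series (1/(1+xyut)^{r-1}) · Φ_g{(1-xyz^2)(1-xz)^g(1-yz)^g} / ((1-t)(1-x^2yu^2t^2)^g(1-xy^2u^2t^2)^g) with Φ_g as above. Then the diagonal generating function Σ_i ([u^i t^i] F) z^i equals T_{≤g}{(1-xyz^2)(1-xz)^g(1-yz)^g} / ((1+xyz)^{r-1}(1-x^2yz^2)^g(1-xy^2z^2)^g), where T_{≤g} keeps only terms of z-degree at most g, and [u^i t^i] denotes the coefficient of u^i t^i (an element of ℚ[x,y]). -/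

import Mathlib

open MvPolynomial

noncomputable section

/-- The coefficient ring `ℚ[x,y]`, with `x = X 0`, `y = X 1`. -/
abbrev Rxy := MvPolynomial (Fin 2) ℚ

/-- Formal power series in `u, t` (`u` is variable `0`, `t` is variable `1`) over `ℚ[x,y]`. -/
abbrev Sut := MvPowerSeries (Fin 2) Rxy

/-- Inclusion of constants `ℚ[x,y] → ℚ[x,y][[u,t]]`. -/
def Cc : Rxy →+* Sut := MvPowerSeries.C

/-- `(1 - xyz²)(1 - xz)^g (1 - yz)^g` as a polynomial in `z` over `ℚ[x,y]`. -/
def Wpoly (g : ℕ) : Polynomial Rxy :=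
  (1 - Polynomial.C (X 0 * X 1) * Polynomial.X ^ 2) *
    (1 - Polynomial.C (X 0) * Polynomial.X) ^ g *
    (1 - Polynomial.C (X 1) * Polynomial.X) ^ g

/-- The numerator `N = Φ_g{(1-xyz²)(1-xz)^g(1-yz)^g}`, where `Φ_g(z^j) = u^j t^j` for
`0 ≤ j ≤ g`, `Φ_g(z^{g+1}) = 0` and `Φ_g(z^j) = u^{j-1} t^j` for `g+2 ≤ j ≤ 2g+2`. -/
def NumS (g : ℕ) : Sut :=
  ∑ j ∈ Finset.range (2 * g + 3),
    (if j ≤ g then MvPowerSeries.X 0 ^ j * MvPowerSeries.X 1 ^ j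
     else if j = g + 1 then 0
     else MvPowerSeries.X 0 ^ (j - 1) * MvPowerSeries.X 1 ^ j) * Cc ((Wpoly g).coeff j)

/-- The denominator `(1+xyut)^{r-1} (1-t) (1-x²yu²t²)^g (1-xy²u²t²)^g`. -/
def DenS (g r : ℕ) : Sut :=
  (1 + Cc (X 0 * X 1) * MvPowerSeries.X 0 * MvPowerSeries.X 1) ^ (r - 1) *
    (1 - MvPowerSeries.X 1) *
    (1 - Cc (X 0 ^ 2 * X 1) * MvPowerSeries.X 0 ^ 2 * MvPowerSeries.X 1 ^ 2) ^ g *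
    (1 - Cc (X 0 * X 1 ^ 2) * MvPowerSeries.X 0 ^ 2 * MvPowerSeries.X 1 ^ 2) ^ g

/-- The coefficient `c_{i,n} ∈ ℚ[x,y]` of `u^i t^n` in a power series. -/
def coeffUT (F : Sut) (i n : ℕ) : Rxy :=
  MvPowerSeries.coeff (Finsupp.single 0 i + Finsupp.single 1 n) F


/-!
Substituting `z ↦ ut` is a ring map `ℚ[x,y][[z]] → ℚ[x,y][[u,t]]`, and the `u^i t^i`-diagonal
satisfies `diag (f(ut) · G) = f · diag G`. The denominator is `P(ut) · (1 - t)`, where `P(z)` is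
the factor on the left of the claim, so `P · diag F = diag G` for `G = N / (1 - t)`. Dividing by
`1 - t` replaces `[u^i t^i]` by `Σ_{k ≤ i} [u^i t^k]`, and every monomial `u^a t^b` of the
numerator `N` has `a ≤ b`, so `diag G = diag N`, which is the truncation `T_{≤g}` of
`(1-xyz²)(1-xz)^g(1-yz)^g`.
-/

namespace Finsupp

lemma eq_single_zero_add_single_one (s : Fin 2 →₀ ℕ) : s = single 0 (s 0) + single 1 (s 1) := by
  ext i
  fin_cases i <;> simp

lemma single_zero_add_single_one_inj {a b c d : ℕ} :
    (single 0 a + single 1 b : Fin 2 →₀ ℕ) = single 0 c + single 1 d ↔ a = c ∧ b = d := by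
  refine ⟨fun h => ⟨by simpa using congr_arg (· 0) h, by simpa using congr_arg (· 1) h⟩, ?_⟩
  rintro ⟨rfl, rfl⟩
  rfl

end Finsupp

open Finsupp

namespace MvPowerSeries

variable {R : Type*} [CommRing R]

def diagonal (F : MvPowerSeries (Fin 2) R) : PowerSeries R :=
  PowerSeries.mk fun i => coeff (single 0 i + single 1 i) F

lemma hasSubst_X_zero_mul_X_one : PowerSeries.HasSubst (X 0 * X 1 : MvPowerSeries (Fin 2) R) :=
  PowerSeries.HasSubst.of_constantCoeff_zero (by simp)

lemma X_zero_mul_X_one_pow (d : ℕ) :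
    (X 0 * X 1 : MvPowerSeries (Fin 2) R) ^ d = monomial (single 0 d + single 1 d) 1 := by
  rw [mul_pow, X_pow_eq, X_pow_eq, monomial_mul_monomial, one_mul]

lemma coeff_subst_X_zero_mul_X_one (f : PowerSeries R) (s : Fin 2 →₀ ℕ) :
    coeff s (f.subst (X 0 * X 1 : MvPowerSeries (Fin 2) R)) =
      if s 0 = s 1 then PowerSeries.coeff (s 0) f else 0 := by
  rw [PowerSeries.coeff_subst hasSubst_X_zero_mul_X_one, finsum_eq_single _ (s 0)]
  · conv_lhs => rw [eq_single_zero_add_single_one s]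
    split_ifs with h
    · simp [X_zero_mul_X_one_pow, h]
    · simp [X_zero_mul_X_one_pow, coeff_monomial, single_eq_single_iff]
      omega
  · intro d hd
    rw [X_zero_mul_X_one_pow, coeff_monomial, if_neg, smul_zero]
    rintro rfl
    simp at hd

lemma diagonal_subst_mul (f : PowerSeries R) (F : MvPowerSeries (Fin 2) R) :
    diagonal (f.subst (X 0 * X 1 : MvPowerSeries (Fin 2) R) * F) = f * diagonal F := by
  ext n
  rw [diagonal, PowerSeries.coeff_mk, coeff_mul, PowerSeries.coeff_mul]
  symm
  refine Finset.sum_of_injOn (fun p => (single 0 p.1 + single 1 p.1, single 0 p.2 + single 1 p.2))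
    ?_ ?_ ?_ ?_
  · intro p _ q _ h
    exact Prod.ext (single_zero_add_single_one_inj.1 (congr_arg Prod.fst h)).1
      (single_zero_add_single_one_inj.1 (congr_arg Prod.snd h)).1
  · intro p hp
    simp only [Finset.mem_coe, Finset.HasAntidiagonal.mem_antidiagonal] at hp ⊢
    rw [← hp, single_add, single_add]
    abel
  · intro q hq hq'
    rw [coeff_subst_X_zero_mul_X_one, ite_mul, zero_mul, ite_eq_right_iff]
    intro hq1
    rw [Finset.HasAntidiagonal.mem_antidiagonal] at hq
    have h0 : q.1 0 + q.2 0 = n := by simpa using congr_arg (· 0) hq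
    have h1 : q.1 1 + q.2 1 = n := by simpa using congr_arg (· 1) hq
    refine absurd ⟨(q.1 0, q.2 0), Finset.HasAntidiagonal.mem_antidiagonal.2 h0, ?_⟩ hq'
    refine Prod.ext ?_ ?_
    · conv_rhs => rw [eq_single_zero_add_single_one q.1, ← hq1]
    · conv_rhs => rw [eq_single_zero_add_single_one q.2, show q.2 1 = q.2 0 by omega]
  · intro p _
    simp [coeff_subst_X_zero_mul_X_one, diagonal]

lemma coeff_single_zero_X_one_mul (G : MvPowerSeries (Fin 2) R) (i : ℕ) :
    coeff (single 0 i) (X 1 * G) = 0 := by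
  rw [X, coeff_monomial_mul, if_neg]
  simp [single_le_iff]

lemma coeff_X_one_mul_single_succ (G : MvPowerSeries (Fin 2) R) (i n : ℕ) :
    coeff (single 0 i + single 1 (n + 1)) (X 1 * G) = coeff (single 0 i + single 1 n) G := by
  have hs : (single 0 i + single 1 (n + 1) : Fin 2 →₀ ℕ) =
      single 1 1 + (single 0 i + single 1 n) := by
    rw [single_add]
    abel
  rw [hs, X, coeff_monomial_mul, if_pos le_self_add, one_mul, add_tsub_cancel_left]

lemma coeff_eq_sum_of_one_sub_X_one_mul {G N : MvPowerSeries (Fin 2) R}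
    (h : (1 - X 1) * G = N) (i n : ℕ) :
    coeff (single 0 i + single 1 n) G =
      ∑ k ∈ Finset.range (n + 1), coeff (single 0 i + single 1 k) N := by
  have hG : G = N + X 1 * G := by rw [← h]; ring
  induction n with
  | zero => rw [hG]; simp [coeff_single_zero_X_one_mul]
  | succ n ih =>
    rw [Finset.sum_range_succ, ← ih, hG, map_add, coeff_X_one_mul_single_succ, ← hG, add_comm]

lemma diagonal_eq_of_one_sub_X_one_mul {G N : MvPowerSeries (Fin 2) R} (h : (1 - X 1) * G = N)
    (hN : ∀ i k, k < i → coeff (single 0 i + single 1 k) N = 0) :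
    diagonal G = diagonal N := by
  ext n
  rw [diagonal, diagonal, PowerSeries.coeff_mk, PowerSeries.coeff_mk,
    coeff_eq_sum_of_one_sub_X_one_mul h, Finset.sum_range_succ, Finset.sum_eq_zero, zero_add]
  exact fun k hk => hN n k (Finset.mem_range.1 hk)

lemma coeff_X_pow_mul_X_pow_mul_C (a b i k : ℕ) (c : R) :
    coeff (single 0 i + single 1 k) (X 0 ^ a * X 1 ^ b * C c : MvPowerSeries (Fin 2) R) =
      if i = a ∧ k = b then c else 0 := by
  rw [X_pow_eq, X_pow_eq, ← monomial_zero_eq_C_apply, monomial_mul_monomial, monomial_mul_monomial,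
    add_zero, one_mul, one_mul]
  simp only [coeff_monomial, single_zero_add_single_one_inj]

end MvPowerSeries

open MvPowerSeries in
lemma coeffUT_NumS_of_le (g : ℕ) {i k : ℕ} (hki : k ≤ i) :
    coeffUT (NumS g) i k = if i = k ∧ i ≤ g then (Wpoly g).coeff i else 0 := by
  -- the `j`-th term is `u^a t^b` with `a ≤ b`, and `a = b` exactly when `j ≤ g`
  rw [coeffUT, NumS, map_sum, Finset.sum_eq_single i]
  · split_ifs <;> simp only [Cc, coeff_X_pow_mul_X_pow_mul_C, zero_mul, map_zero, true_and] <;>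
      (try split_ifs) <;> first | rfl | omega
  · intro j _ hji
    split_ifs <;> simp only [Cc, coeff_X_pow_mul_X_pow_mul_C, zero_mul, map_zero] <;>
      (try split_ifs) <;> first | rfl | omega
  · intro hi
    rw [Finset.mem_range] at hi
    rw [if_neg (by omega), if_neg (by omega), Cc, coeff_X_pow_mul_X_pow_mul_C, if_neg (by omega)]

open MvPowerSeries in
lemma diagonal_NumS (g : ℕ) :
    diagonal (NumS g) =
      ∑ j ∈ Finset.range (g + 1), PowerSeries.C ((Wpoly g).coeff j) * PowerSeries.X ^ j := by
  refine PowerSeries.ext fun n => ?_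
  rw [diagonal, PowerSeries.coeff_mk]
  change coeffUT (NumS g) n n = _
  simp [coeffUT_NumS_of_le g le_rfl, PowerSeries.coeff_C_mul, PowerSeries.coeff_X_pow]

theorem stmt15_general (g r : ℕ) (F : Sut) (hF : DenS g r * F = NumS g) :
    ((1 + PowerSeries.C (X 0 * X 1) * PowerSeries.X) ^ (r - 1) *
        (1 - PowerSeries.C (X 0 ^ 2 * X 1) * PowerSeries.X ^ 2) ^ g *
        (1 - PowerSeries.C (X 0 * X 1 ^ 2) * PowerSeries.X ^ 2) ^ g) *
      PowerSeries.mk (fun i => coeffUT F i i) =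
    ∑ j ∈ Finset.range (g + 1),
      PowerSeries.C ((Wpoly g).coeff j) * PowerSeries.X ^ j := by
  set P : PowerSeries Rxy :=
    (1 + PowerSeries.C (X 0 * X 1) * PowerSeries.X) ^ (r - 1) *
      (1 - PowerSeries.C (X 0 ^ 2 * X 1) * PowerSeries.X ^ 2) ^ g *
      (1 - PowerSeries.C (X 0 * X 1 ^ 2) * PowerSeries.X ^ 2) ^ g
  have hDen : DenS g r =
      (1 - MvPowerSeries.X 1) * P.subst (MvPowerSeries.X 0 * MvPowerSeries.X 1 : Sut) := by
    rw [DenS, ← PowerSeries.coe_substAlgHom MvPowerSeries.hasSubst_X_zero_mul_X_one]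
    simp only [P, map_mul, map_pow, map_add, map_sub, map_one, PowerSeries.coe_substAlgHom,
      PowerSeries.subst_C, PowerSeries.subst_X MvPowerSeries.hasSubst_X_zero_mul_X_one, Cc]
    ring
  calc P * MvPowerSeries.diagonal F
        = MvPowerSeries.diagonal (P.subst (MvPowerSeries.X 0 * MvPowerSeries.X 1 : Sut) * F) :=
          (MvPowerSeries.diagonal_subst_mul P F).symm
    _ = MvPowerSeries.diagonal (NumS g) := by
      refine MvPowerSeries.diagonal_eq_of_one_sub_X_one_mul (by rw [← hF, hDen, mul_assoc])
        fun i k hki => ?_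
      exact (coeffUT_NumS_of_le g hki.le).trans (if_neg (by omega))
    _ = _ := diagonal_NumS g

theorem stmt15 (g r : ℕ) (hr : 1 ≤ r) (F : Sut) (hF : DenS g r * F = NumS g) :
    ((1 + PowerSeries.C (X 0 * X 1) * PowerSeries.X) ^ (r - 1) *
        (1 - PowerSeries.C (X 0 ^ 2 * X 1) * PowerSeries.X ^ 2) ^ g *
        (1 - PowerSeries.C (X 0 * X 1 ^ 2) * PowerSeries.X ^ 2) ^ g) *
      PowerSeries.mk (fun i => coeffUT F i i) =
    ∑ j ∈ Finset.range (g + 1),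
      PowerSeries.C ((Wpoly g).coeff j) * PowerSeries.X ^ j :=
  stmt15_general g r F hF

end
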